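/- Exterior lattice resolvent sum bound (key estimate in the proof of Lemma 5.2): There exists a constant C > 0 such that for every k_F ∈ (0,1] and every L ≥ 1/k_F, one has (1/L³) ∑_{k ∈ Λ*_L, k_F + k_F^{3/2} ≤ |k| ≤ 3 k_F} 1/(|k|² − k_F²) ≤ C k_F^{1/2}. (With ρ := k_F³ this is the bound C ρ^{1/6} used in the paper.) -/

import Mathlib

/-!
On the shell `k_F + k_F^{3/2} ≤ |k|` one has `|k|² - k_F² ≥ 2 k_F · k_F^{3/2}`, so every term is at
most `1 / (2 k_F^{5/2})`. The lattice points with `|k| ≤ 3 k_F` lie in the integer cube of side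
`2⌊3 k_F L / 2π⌋ + 1 ≤ 2 k_F L` (using `π > 3` and `k_F L ≥ 1`), so there are at most
`8 k_F³ L³` of them and the normalised sum is at most `8 k_F³ / (2 k_F^{5/2}) = 4 k_F^{1/2}`.
-/

noncomputable section

open Real

abbrev E3 : Type := EuclideanSpace ℝ (Fin 3)

/-- The momentum lattice point `(2π/L)·n` of `Λ*_L`, for `n ∈ ℤ³`. -/
def momVec (L : ℝ) (n : Fin 3 → ℤ) : E3 :=
  ∑ j : Fin 3, (2 * π / L * (n j : ℝ)) • EuclideanSpace.single j (1 : ℝ)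

/-- The Euclidean norm `|k|` of the lattice point `(2π/L)·n`. -/
def knorm (L : ℝ) (n : Fin 3 → ℤ) : ℝ := ‖momVec L n‖

lemma momVec_apply (L : ℝ) (n : Fin 3 → ℤ) (i : Fin 3) :
    momVec L n i = 2 * π / L * n i := by
  simp [momVec, Pi.single_apply]

lemma abs_le_knorm_mul_div {L : ℝ} (hL : 0 < L) (n : Fin 3 → ℤ) (i : Fin 3) :
    |(n i : ℝ)| ≤ knorm L n * L / (2 * π) := by
  have h := PiLp.norm_apply_le (momVec L n) i
  rw [momVec_apply, Real.norm_eq_abs, abs_mul, abs_of_pos (by positivity)] at h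
  rw [le_div_iff₀ (by positivity)]
  calc |(n i : ℝ)| * (2 * π) = 2 * π / L * |(n i : ℝ)| * L := by field_simp
    _ ≤ knorm L n * L := by gcongr; exact h

def intCube (d : ℕ) (N : ℤ) : Finset (Fin d → ℤ) :=
  Finset.Icc (fun _ => -N) (fun _ => N)

lemma mem_intCube {d : ℕ} {N : ℤ} {n : Fin d → ℤ} : n ∈ intCube d N ↔ ∀ i, |n i| ≤ N := by
  simp only [intCube, Finset.mem_Icc, Pi.le_def, abs_le, ← forall_and]

lemma card_intCube_le {d : ℕ} {y : ℝ} (hy : 0 ≤ y) :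
    ((intCube d ⌊y⌋).card : ℝ) ≤ (2 * y + 1) ^ d := by
  have hN : 0 ≤ ⌊y⌋ := Int.floor_nonneg.mpr hy
  have hcard : (intCube d ⌊y⌋).card = (2 * ⌊y⌋ + 1).toNat ^ d := by
    simp only [intCube, Pi.card_Icc, Int.card_Icc, Finset.prod_const, Finset.card_univ,
      Fintype.card_fin]
    congr 2
    ring
  rw [hcard, Nat.cast_pow, ← Int.cast_natCast, Int.toNat_of_nonneg (by omega)]
  push_cast
  gcongr
  exact Int.floor_le y

lemma mem_intCube_of_knorm_le {L R : ℝ} (hL : 0 < L) {n : Fin 3 → ℤ} (hn : knorm L n ≤ R) :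
    n ∈ intCube 3 ⌊R * L / (2 * π)⌋ := by
  refine mem_intCube.mpr fun i => Int.le_floor.mpr ?_
  calc ((|n i| : ℤ) : ℝ) = |(n i : ℝ)| := Int.cast_abs
    _ ≤ knorm L n * L / (2 * π) := abs_le_knorm_mul_div hL n i
    _ ≤ R * L / (2 * π) := by gcongr

lemma tsum_le_card_mul {α : Type*} {f : α → ℝ} (s : Finset α) {b : ℝ}
    (hzero : ∀ a ∉ s, f a = 0) (hle : ∀ a ∈ s, f a ≤ b) : ∑' a, f a ≤ s.card * b := by
  rw [tsum_eq_sum hzero, ← nsmul_eq_mul]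
  exact Finset.sum_le_card_nsmul s f b hle

lemma one_div_sq_sub_sq_le {k a r : ℝ} (hk : 0 < k) (ha : 0 < a) (hr : k + a ≤ r) :
    1 / (r ^ 2 - k ^ 2) ≤ 1 / (2 * k * a) := by
  have hsq : (k + a) ^ 2 ≤ r ^ 2 := pow_le_pow_left₀ (by positivity) hr 2
  apply one_div_le_one_div_of_le (by positivity)
  nlinarith [sq_nonneg a]

theorem exterior_lattice_resolvent_sum_bound :
    ∃ C : ℝ, 0 < C ∧
      ∀ kF : ℝ, kF ∈ Set.Ioc (0 : ℝ) 1 → ∀ L : ℝ, 1 / kF ≤ L →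
        (1 / L ^ 3) *
            ∑' n : Fin 3 → ℤ,
              (if kF + kF ^ ((3 : ℝ) / 2) ≤ knorm L n ∧ knorm L n ≤ 3 * kF then
                1 / (knorm L n ^ 2 - kF ^ 2)
              else 0)
          ≤ C * kF ^ ((1 : ℝ) / 2) := by
  refine ⟨4, by norm_num, ?_⟩
  rintro kF ⟨hkF, -⟩ L hL
  have hL0 : 0 < L := (one_div_pos.mpr hkF).trans_le hL
  have hkFL : 1 ≤ kF * L := by rwa [div_le_iff₀ hkF, mul_comm] at hL
  set a := kF ^ ((3 : ℝ) / 2)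
  set box := intCube 3 ⌊3 * kF * L / (2 * π)⌋
  have hcard : (box.card : ℝ) ≤ (2 * kF * L) ^ 3 := by
    refine (card_intCube_le (by positivity)).trans (pow_le_pow_left₀ (by positivity) ?_ 3)
    have hpi : 3 * kF * L / π ≤ kF * L := by
      rw [div_le_iff₀ pi_pos]; nlinarith [pi_gt_three]
    calc 2 * (3 * kF * L / (2 * π)) + 1 = 3 * kF * L / π + 1 := by field_simp
      _ ≤ 2 * kF * L := by linarith
  have ha0 : 0 < a := by positivity
  have ha : a * kF ^ ((1 : ℝ) / 2) = kF ^ 2 := by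
    rw [← rpow_add hkF]; norm_num
  calc _ ≤ 1 / L ^ 3 * (box.card * (1 / (2 * kF * a))) := by
        gcongr
        refine tsum_le_card_mul box
          (fun n hn => if_neg fun h => hn (mem_intCube_of_knorm_le hL0 h.2)) fun n _ => ?_
        split_ifs with h
        · exact one_div_sq_sub_sq_le hkF (by positivity) h.1
        · positivity
    _ ≤ 1 / L ^ 3 * ((2 * kF * L) ^ 3 * (1 / (2 * kF * a))) := by gcongr
    _ = 4 * kF ^ ((1 : ℝ) / 2) := by
        field_simp
        linear_combination -4 * ha
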